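/- For every 3-CNF formula φ with n variables and m clauses (each clause having three literals over distinct variables and no clause containing a variable together with its negation), φ has a satisfying truth assignment if and only if there exists a word w ∈ {a,b}* of length n such that δ_φ(S_init, w) is defined and equals S_end. Moreover, the correspondence is given by: the i-th letter of w is a iff the assignment sets x_i to true. -/

import Mathlib

namespace PaperSync

variable {Q A : Type*}

/-- The extension of a partial transition function `δ : Q → A → Option Q` to words. -/
def wordMap (δ : Q → A → Option Q) : Q → List A → Option Q
  | q, [] => some q
  | q, x :: w => (δ q x).bind fun q' => wordMap δ q' w

/-- A word `w` carefully synchronizes the PFA `δ`: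
`δ(q, w)` is defined for every state and all values agree. -/
def CarefullySync (δ : Q → A → Option Q) (w : List A) : Prop :=
  ∃ qbar : Q, ∀ q : Q, wordMap δ q w = some qbar

open Classical in
/-- The image of a set of states under a word: defined iff `δ(q,w)` is defined
for all `q ∈ S`, in which case it is `{δ(q,w) : q ∈ S}`. -/
noncomputable def setImage (δ : Q → A → Option Q) (S : Set Q) (w : List A) :
    Option (Set Q) :=
  if ∀ q ∈ S, (wordMap δ q w).isSome then
    some {q' | ∃ q ∈ S, wordMap δ q w = some q'}
  else none

/-- A PFA is one-cluster with respect to a letter `a`: `a` is defined at every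
state and the functional digraph `G_a` of `a` has exactly one weakly connected
component. -/
def OneCluster (δ : Q → A → Option Q) (a : A) : Prop :=
  (∀ q : Q, (δ q a).isSome) ∧
  ∀ p q : Q, Relation.EqvGen (fun u v => δ u a = some v) p q

/-- The vertex set of the `a`-cycle: states returning to themselves under some
positive power of `a`. -/
def cycleSet (δ : Q → A → Option Q) (a : A) : Set Q :=
  {q | ∃ k : ℕ, 1 ≤ k ∧ wordMap δ q (List.replicate k a) = some q}

/-- The level of a state: the least `k` with `δ(q, a^k)` on the `a`-cycle. -/
noncomputable def levelOf (δ : Q → A → Option Q) (a : A) (q : Q) : ℕ :=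
  sInf {k | ∃ p ∈ cycleSet δ a, wordMap δ q (List.replicate k a) = some p}

/-- The level of `G_a`: the maximal level of a state. -/
noncomputable def levelG [Fintype Q] (δ : Q → A → Option Q) (a : A) : ℕ :=
  Finset.univ.sup (levelOf δ a)

/-- The binary alphabet `{a, b}` of `A_φ`. -/
inductive AB | a | b
deriving DecidableEq

instance : Fintype AB := ⟨{AB.a, AB.b}, by intro x; cases x <;> simp⟩

/-- The states of `A_φ` for a 3-CNF formula with `n` variables and `m`
clauses: `p i` is `p_{i+1}`, `r i` is `r_{i+1}`, `ct i j` is `c_{i+1}^{x_{j+1}}`,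
`cf i j` is `c̄_{i+1}^{x_{j+1}}`, `ctend i` is `c_{i+1}^{end}`, and `cfend i` is
`c̄_{i+1}^{end}`. -/
inductive StQ (n m : ℕ)
  | p (i : Fin m)
  | r (i : Fin m)
  | ct (i : Fin m) (j : Fin n)
  | cf (i : Fin m) (j : Fin n)
  | ctend (i : Fin m)
  | cfend (i : Fin m)
deriving DecidableEq, Fintype

/-- The transition function of `A_φ`, where the formula `φ` is given by its
clauses `Cl i ⊆ Fin n × Bool` (a literal `(j, tt)` is `x_{j+1}`, a literal
`(j, ff)` is `¬x_{j+1}`). -/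
def dphi (n m : ℕ) (hn : 0 < n) (Cl : Fin m → Finset (Fin n × Bool)) :
    StQ n m → AB → Option (StQ n m)
  | .p i, .a => some (.p ⟨(i.val + 1) % m, Nat.mod_lt _ i.pos⟩)
  | .p i, .b => some (.cf i ⟨0, hn⟩)
  | .r i, .a => some (.p i)
  | .r _, .b => none
  | .ctend i, .a => some (.r i)
  | .ctend i, .b => some (.p ⟨0, i.pos⟩)
  | .cfend i, .a => some (.r i)
  | .cfend _, .b => none
  | .ct i j, _ =>
      some (if h : j.val + 1 < n then .ct i ⟨j.val + 1, h⟩ else .ctend i)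
  | .cf i j, .a =>
      some (if h : j.val + 1 < n then
          (if (j, true) ∈ Cl i then .ct i ⟨j.val + 1, h⟩ else .cf i ⟨j.val + 1, h⟩)
        else (if (j, true) ∈ Cl i then .ctend i else .cfend i))
  | .cf i j, .b =>
      some (if h : j.val + 1 < n then
          (if (j, false) ∈ Cl i then .ct i ⟨j.val + 1, h⟩ else .cf i ⟨j.val + 1, h⟩)
        else (if (j, false) ∈ Cl i then .ctend i else .cfend i))

/-- Every clause consists of exactly three literals over pairwise distinct
variables (in particular no clause contains both a variable and its
negation). -/
def GoodClauses (n m : ℕ) (Cl : Fin m → Finset (Fin n × Bool)) : Prop :=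
  ∀ i : Fin m, (Cl i).card = 3 ∧ ((Cl i).image Prod.fst).card = 3

/-- The set `S_init = {c̄_1^{x_1}, …, c̄_m^{x_1}}`. -/
def Sinit (n m : ℕ) (hn : 0 < n) : Set (StQ n m) :=
  Set.range fun i : Fin m => StQ.cf i ⟨0, hn⟩

/-- The set `S_end = {c_1^{end}, …, c_m^{end}}`. -/
def Send (n m : ℕ) : Set (StQ n m) :=
  Set.range StQ.ctend
/-- A truth assignment `e` satisfies `φ` if every clause contains a literal
evaluating to true. -/
def Satisfies (n m : ℕ) (Cl : Fin m → Finset (Fin n × Bool))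
    (e : Fin n → Bool) : Prop :=
  ∀ i : Fin m, ∃ l ∈ Cl i, e l.1 = l.2

/-! ### Auxiliary lemmas -/

/-- `a` corresponds to `true`, `b` to `false`. -/
def toB : AB → Bool
  | .a => true
  | .b => false

lemma toB_eq_decide (c : AB) : toB c = decide (c = AB.a) := by cases c <;> rfl

/-- Whether reading the word `w` starting at variable index `j` hits a literal
of the clause `C`. -/
def hitB {n : ℕ} (C : Finset (Fin n × Bool)) : ℕ → List AB → Bool
  | _, [] => false
  | j, c :: w =>
      ((if h : j < n then decide ((⟨j, h⟩, toB c) ∈ C) else false)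
        || hitB C (j + 1) w)

section Runs

variable {n m : ℕ} (hn : 0 < n) (Cl : Fin m → Finset (Fin n × Bool)) (i : Fin m)

lemma ct_run : ∀ (w : List AB) (j : ℕ) (hj : j < n), j + w.length = n →
    wordMap (dphi n m hn Cl) (.ct i ⟨j, hj⟩) w = some (.ctend i)
  | [], j, hj, hl => absurd hl (by simp; omega)
  | c :: w, j, hj, hl => by
    have hδ : dphi n m hn Cl (.ct i ⟨j, hj⟩) c =
        some (if h : j + 1 < n then .ct i ⟨j + 1, h⟩ else .ctend i) := by
      cases c <;> rfl
    rw [wordMap, hδ, Option.bind_some]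
    by_cases h : j + 1 < n
    · rw [dif_pos h]
      exact ct_run w (j + 1) h (by simp at hl ⊢; omega)
    · rw [dif_neg h]
      have hw : w = [] := by
        have : w.length = 0 := by simp at hl; omega
        exact List.length_eq_zero_iff.mp this
      subst hw; rfl

lemma cf_run : ∀ (w : List AB) (j : ℕ) (hj : j < n), j + w.length = n →
    wordMap (dphi n m hn Cl) (.cf i ⟨j, hj⟩) w =
      some (if hitB (Cl i) j w then .ctend i else .cfend i)
  | [], j, hj, hl => absurd hl (by simp; omega)
  | c :: w, j, hj, hl => by
    have hδ : dphi n m hn Cl (.cf i ⟨j, hj⟩) c =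
        some (if h : j + 1 < n then
            (if (⟨j, hj⟩, toB c) ∈ Cl i then .ct i ⟨j + 1, h⟩
              else .cf i ⟨j + 1, h⟩)
          else (if (⟨j, hj⟩, toB c) ∈ Cl i then .ctend i else .cfend i)) := by
      cases c <;> rfl
    have hhit : hitB (Cl i) j (c :: w) =
        (decide ((⟨j, hj⟩, toB c) ∈ Cl i) || hitB (Cl i) (j + 1) w) := by
      rw [hitB, dif_pos hj]
    rw [wordMap, hδ, Option.bind_some, hhit]
    by_cases hm : (⟨j, hj⟩, toB c) ∈ Cl i
    · simp only [if_pos hm, decide_eq_true hm, Bool.true_or, if_pos rfl]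
      by_cases h : j + 1 < n
      · rw [dif_pos h]
        exact ct_run hn Cl i w (j + 1) h (by simp at hl ⊢; omega)
      · rw [dif_neg h]
        have hw : w = [] := by
          have : w.length = 0 := by simp at hl; omega
          exact List.length_eq_zero_iff.mp this
        subst hw; rfl
    · simp only [if_neg hm, decide_eq_false hm, Bool.false_or]
      by_cases h : j + 1 < n
      · rw [dif_pos h]
        exact cf_run w (j + 1) h (by simp at hl ⊢; omega)
      · rw [dif_neg h]
        have hw : w = [] := by
          have : w.length = 0 := by simp at hl; omega
          exact List.length_eq_zero_iff.mp this
        subst hw; rfl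

lemma hitB_iff {C : Finset (Fin n × Bool)} :
    ∀ (w : List AB) (j : ℕ), j + w.length = n →
    (hitB C j w = true ↔
      ∃ k, ∃ hk : k < w.length, ∃ h : j + k < n,
        (⟨j + k, h⟩, toB (w.get ⟨k, hk⟩)) ∈ C)
  | [], j, hl => by simp [hitB]
  | c :: w, j, hl => by
    have hj : j < n := by simp at hl; omega
    rw [hitB, dif_pos hj]
    rw [Bool.or_eq_true, decide_eq_true_eq,
      hitB_iff w (j + 1) (by simp at hl ⊢; omega)]
    constructor
    · rintro (h | ⟨k, hk, h, hmem⟩)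
      · exact ⟨0, by simp, by omega, by simpa using h⟩
      · refine ⟨k + 1, by simpa using Nat.succ_lt_succ hk, by omega, ?_⟩
        have : ((⟨j + (k + 1), by omega⟩ : Fin n), toB ((c :: w).get ⟨k + 1, by simpa using Nat.succ_lt_succ hk⟩)) = (⟨j + 1 + k, h⟩, toB (w.get ⟨k, hk⟩)) := by
          simp only [List.get_cons_succ]
          congr 1
          exact Fin.mk_eq_mk.mpr (by omega)
        rw [this]; exact hmem
    · rintro ⟨k, hk, h, hmem⟩
      match k with
      | 0 =>
        left
        have : ((⟨j + 0, h⟩ : Fin n), toB ((c :: w).get ⟨0, hk⟩)) = (⟨j, hj⟩, toB c) := rfl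
        rwa [this] at hmem
      | k + 1 =>
        right
        refine ⟨k, by simpa using Nat.lt_of_succ_lt_succ hk, by omega, ?_⟩
        have : ((⟨j + (k + 1), h⟩ : Fin n), toB ((c :: w).get ⟨k + 1, hk⟩)) = (⟨j + 1 + k, by omega⟩, toB (w.get ⟨k, by simpa using Nat.lt_of_succ_lt_succ hk⟩)) := by
          simp only [List.get_cons_succ]
          congr 1
          exact Fin.mk_eq_mk.mpr (by omega)
        rwa [this] at hmem

lemma main_run (w : List AB) (hw : w.length = n) :
    wordMap (dphi n m hn Cl) (.cf i ⟨0, hn⟩) w =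
      some (if ∃ l ∈ Cl i, toB (w.get (Fin.cast hw.symm l.1)) = l.2
        then .ctend i else .cfend i) := by
  rw [cf_run hn Cl i w 0 hn (by omega)]
  congr 1
  have hiff : hitB (Cl i) 0 w = true ↔
      ∃ l ∈ Cl i, toB (w.get (Fin.cast hw.symm l.1)) = l.2 := by
    rw [hitB_iff w 0 (by omega)]
    constructor
    · rintro ⟨k, hk, h, hmem⟩
      refine ⟨(⟨0 + k, h⟩, toB (w.get ⟨k, hk⟩)), hmem, ?_⟩
      show toB (w.get (Fin.cast hw.symm ⟨0 + k, h⟩)) = toB (w.get ⟨k, hk⟩)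
      exact congrArg toB (congrArg w.get (Fin.ext (Nat.zero_add k)))
    · rintro ⟨l, hl, hval⟩
      refine ⟨l.1.val, by omega, by omega, ?_⟩
      have : ((⟨0 + l.1.val, by omega⟩ : Fin n),
          toB (w.get ⟨l.1.val, by omega⟩)) = l := by
        rw [Prod.ext_iff]
        constructor
        · exact Fin.ext (by simp)
        · exact hval
      rwa [this]
  by_cases hc : ∃ l ∈ Cl i, toB (w.get (Fin.cast hw.symm l.1)) = l.2
  · rw [if_pos hc, if_pos (hiff.mpr hc)]
  · rw [if_neg hc, if_neg (fun h => hc (hiff.mp h))]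

lemma setImage_eq_iff (w : List AB) (hw : w.length = n) :
    setImage (dphi n m hn Cl) (Sinit n m hn) w = some (Send n m) ↔
      ∀ i : Fin m, wordMap (dphi n m hn Cl) (.cf i ⟨0, hn⟩) w
        = some (.ctend i) := by
  have hdef : ∀ q ∈ Sinit n m hn, (wordMap (dphi n m hn Cl) q w).isSome := by
    rintro q ⟨i, rfl⟩
    rw [main_run hn Cl i w hw]
    rfl
  rw [setImage, if_pos hdef, Option.some_inj]
  constructor
  · intro hset i
    have hmem : StQ.ctend i ∈ Send n m := ⟨i, rfl⟩
    rw [← hset] at hmem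
    obtain ⟨q, ⟨i', rfl⟩, hq⟩ := hmem
    rw [main_run hn Cl i' w hw, Option.some_inj] at hq
    by_cases hc : ∃ l ∈ Cl i', toB (w.get (Fin.cast hw.symm l.1)) = l.2
    · rw [if_pos hc] at hq
      obtain rfl : i' = i := by cases hq; rfl
      rw [main_run hn Cl i' w hw, if_pos hc]
    · rw [if_neg hc] at hq
      exact absurd hq (by simp)
  · intro hall
    ext q'
    constructor
    · rintro ⟨q, ⟨i, rfl⟩, hq⟩
      rw [hall i, Option.some_inj] at hq
      exact hq ▸ ⟨i, rfl⟩
    · rintro ⟨i, rfl⟩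
      exact ⟨.cf i ⟨0, hn⟩, ⟨i, rfl⟩, hall i⟩

end Runs

/-- `φ` has a satisfying assignment iff there is a word
`w ∈ {a,b}*` of length `n` with `δ_φ(S_init, w)` defined and equal to `S_end`;
moreover the correspondence sends an assignment `e` to the word whose `i`-th
letter is `a` iff `e` sets `x_i` to true, and conversely any such word yields
the satisfying assignment "`x_i` true iff the `i`-th letter of `w` is `a`". -/
theorem Aphi_word_iff_satisfiable (n m : ℕ) (hn : 0 < n)
    (Cl : Fin m → Finset (Fin n × Bool)) (hCl : GoodClauses n m Cl) :
    ((∃ e : Fin n → Bool, Satisfies n m Cl e) ↔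
      (∃ w : List AB, w.length = n ∧
        setImage (dphi n m hn Cl) (Sinit n m hn) w = some (Send n m))) ∧
    (∀ e : Fin n → Bool, Satisfies n m Cl e →
      setImage (dphi n m hn Cl) (Sinit n m hn)
        (List.ofFn fun j : Fin n => if e j then AB.a else AB.b) =
        some (Send n m)) ∧
    (∀ (w : List AB) (hw : w.length = n),
      setImage (dphi n m hn Cl) (Sinit n m hn) w = some (Send n m) →
      Satisfies n m Cl fun j : Fin n =>
        decide (w.get (Fin.cast hw.symm j) = AB.a)) := by
  have part2 : ∀ e : Fin n → Bool, Satisfies n m Cl e →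
      setImage (dphi n m hn Cl) (Sinit n m hn)
        (List.ofFn fun j : Fin n => if e j then AB.a else AB.b) =
        some (Send n m) := by
    intro e he
    have hw : (List.ofFn fun j : Fin n => if e j then AB.a else AB.b).length = n := by
      simp
    set w : List AB := List.ofFn fun j : Fin n => if e j then AB.a else AB.b
      with hwdef
    have hget : ∀ j : Fin n, w.get (Fin.cast hw.symm j) =
        (if e j then AB.a else AB.b) := by
      intro j
      rw [List.get_ofFn]
      congr 1
    rw [setImage_eq_iff hn Cl w hw]
    intro i
    rw [main_run hn Cl i w hw]
    congr 1
    rw [if_pos]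
    obtain ⟨l, hl, hval⟩ := he i
    refine ⟨l, hl, ?_⟩
    rw [hget l.1, ← hval]
    by_cases h : e l.1 <;> simp [h, toB]
  have part3 : ∀ (w : List AB) (hw : w.length = n),
      setImage (dphi n m hn Cl) (Sinit n m hn) w = some (Send n m) →
      Satisfies n m Cl fun j : Fin n =>
        decide (w.get (Fin.cast hw.symm j) = AB.a) := by
    intro w hw hset i
    have h := (setImage_eq_iff hn Cl w hw).mp hset i
    rw [main_run hn Cl i w hw, Option.some_inj] at h
    by_cases hc : ∃ l ∈ Cl i, toB (w.get (Fin.cast hw.symm l.1)) = l.2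
    · obtain ⟨l, hl, hval⟩ := hc
      exact ⟨l, hl, by simp only [← toB_eq_decide]; exact hval⟩
    · rw [if_neg hc] at h
      exact absurd h (by simp)
  refine ⟨⟨?_, ?_⟩, part2, part3⟩
  · rintro ⟨e, he⟩
    exact ⟨List.ofFn fun j : Fin n => if e j then AB.a else AB.b,
      by simp, part2 e he⟩
  · rintro ⟨w, hw, hset⟩
    exact ⟨_, part3 w hw hset⟩

end PaperSync
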